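/- arXiv:math/0008011 — 8 statements merged into one kernel-verified Lean document; each statement's English description precedes it below -/
import Mathlib

section
/- The ℤ-linear map ι : L → L defined on the basis by ι(ℓ) = ℓ + f − 2e₇ + e₈ + e₉, ι(eᵢ) = ℓ − eᵢ − e₇ for i = 1,…,6, ι(e₇) = f − e₇ + e₈ + e₉, ι(e₈) = e₈, ι(e₉) = e₉ (the action of the elliptic inversion (−1)_B on H²(B,ℤ), Table 1 of the paper) satisfies: ι ∘ ι = id, ⟨ι(x), ι(y)⟩ = ⟨x, y⟩ for all x, y ∈ L, ι(f) = f, ι(n₁) = n₁, ι(n₂) = n₂, ι(o₁) = o₁ and ι(o₂) = o₂. -/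
/-!
Statement 0: The action of the elliptic inversion `(-1)_B` on `H²(B,ℤ)` (Table 1)
is an involution, preserves the intersection form, and fixes `f, n₁, n₂, o₁, o₂`.

`L` is the free ℤ-module `Fin 10 → ℤ` with basis `ℓ = el, e₁, …, e₉`.
-/

set_option maxHeartbeats 1000000

noncomputable section

def el : Fin 10 → ℤ := Pi.single 0 1
def e1 : Fin 10 → ℤ := Pi.single 1 1
def e2 : Fin 10 → ℤ := Pi.single 2 1
def e3 : Fin 10 → ℤ := Pi.single 3 1
def e4 : Fin 10 → ℤ := Pi.single 4 1
def e5 : Fin 10 → ℤ := Pi.single 5 1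
def e6 : Fin 10 → ℤ := Pi.single 6 1
def e7 : Fin 10 → ℤ := Pi.single 7 1
def e8 : Fin 10 → ℤ := Pi.single 8 1
def e9 : Fin 10 → ℤ := Pi.single 9 1

/-- The intersection form: `⟨ℓ,ℓ⟩ = 1`, `⟨eᵢ,eⱼ⟩ = -δᵢⱼ`, `⟨ℓ,eᵢ⟩ = 0`. -/
def form (x y : Fin 10 → ℤ) : ℤ := 2 * x 0 * y 0 - ∑ i, x i * y i

def ff : Fin 10 → ℤ := (3 : ℤ) • el - (e1 + e2 + e3 + e4 + e5 + e6 + e7 + e8 + e9)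
def n1 : Fin 10 → ℤ := e8 - e9
def o1 : Fin 10 → ℤ := ff - e8 + e9
def n2 : Fin 10 → ℤ := el - e7 - e8 - e9
def o2 : Fin 10 → ℤ := (2 : ℤ) • el - (e1 + e2 + e3 + e4 + e5 + e6)

theorem stmt0 (ι : (Fin 10 → ℤ) →ₗ[ℤ] (Fin 10 → ℤ))
    (hl : ι el = el + ff - (2 : ℤ) • e7 + e8 + e9)
    (h1 : ι e1 = el - e1 - e7) (h2 : ι e2 = el - e2 - e7)
    (h3 : ι e3 = el - e3 - e7) (h4 : ι e4 = el - e4 - e7)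
    (h5 : ι e5 = el - e5 - e7) (h6 : ι e6 = el - e6 - e7)
    (h7 : ι e7 = ff - e7 + e8 + e9)
    (h8 : ι e8 = e8) (h9 : ι e9 = e9) :
    (∀ x, ι (ι x) = x) ∧
    (∀ x y, form (ι x) (ι y) = form x y) ∧
    ι ff = ff ∧ ι n1 = n1 ∧ ι n2 = n2 ∧ ι o1 = o1 ∧ ι o2 = o2 := by
  have hrep : ∀ x : Fin 10 → ℤ, x = x 0 • el + x 1 • e1 + x 2 • e2 + x 3 • e3 +
      x 4 • e4 + x 5 • e5 + x 6 • e6 + x 7 • e7 + x 8 • e8 + x 9 • e9 := by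
    intro x
    funext j
    fin_cases j <;>
      simp [el, e1, e2, e3, e4, e5, e6, e7, e8, e9, Pi.single_apply]
  have happ : ∀ x : Fin 10 → ℤ, ι x =
      (4*x 0 + x 1 + x 2 + x 3 + x 4 + x 5 + x 6 + 3*x 7) • el +
      (-x 0 - x 1 - x 7) • e1 + (-x 0 - x 2 - x 7) • e2 + (-x 0 - x 3 - x 7) • e3 +
      (-x 0 - x 4 - x 7) • e4 + (-x 0 - x 5 - x 7) • e5 + (-x 0 - x 6 - x 7) • e6 +
      (-3*x 0 - x 1 - x 2 - x 3 - x 4 - x 5 - x 6 - 2*x 7) • e7 +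
      x 8 • e8 + x 9 • e9 := by
    intro x
    conv_lhs => rw [hrep x]
    simp only [map_add, map_smul, hl, h1, h2, h3, h4, h5, h6, h7, h8, h9, ff]
    try module
  have c0 : ∀ x : Fin 10 → ℤ,
      ι x 0 = 4*x 0 + x 1 + x 2 + x 3 + x 4 + x 5 + x 6 + 3*x 7 := by
    intro x
    rw [happ x]
    simp [el, e1, e2, e3, e4, e5, e6, e7, e8, e9, Pi.single_apply]
  have c1 : ∀ x : Fin 10 → ℤ, ι x 1 = -x 0 - x 1 - x 7 := by
    intro x
    rw [happ x]
    simp [el, e1, e2, e3, e4, e5, e6, e7, e8, e9, Pi.single_apply]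
  have c2 : ∀ x : Fin 10 → ℤ, ι x 2 = -x 0 - x 2 - x 7 := by
    intro x
    rw [happ x]
    simp [el, e1, e2, e3, e4, e5, e6, e7, e8, e9, Pi.single_apply]
  have c3 : ∀ x : Fin 10 → ℤ, ι x 3 = -x 0 - x 3 - x 7 := by
    intro x
    rw [happ x]
    simp [el, e1, e2, e3, e4, e5, e6, e7, e8, e9, Pi.single_apply]
  have c4 : ∀ x : Fin 10 → ℤ, ι x 4 = -x 0 - x 4 - x 7 := by
    intro x
    rw [happ x]
    simp [el, e1, e2, e3, e4, e5, e6, e7, e8, e9, Pi.single_apply]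
  have c5 : ∀ x : Fin 10 → ℤ, ι x 5 = -x 0 - x 5 - x 7 := by
    intro x
    rw [happ x]
    simp [el, e1, e2, e3, e4, e5, e6, e7, e8, e9, Pi.single_apply]
  have c6 : ∀ x : Fin 10 → ℤ, ι x 6 = -x 0 - x 6 - x 7 := by
    intro x
    rw [happ x]
    simp [el, e1, e2, e3, e4, e5, e6, e7, e8, e9, Pi.single_apply]
  have c7 : ∀ x : Fin 10 → ℤ,
      ι x 7 = -3*x 0 - x 1 - x 2 - x 3 - x 4 - x 5 - x 6 - 2*x 7 := by
    intro x
    rw [happ x]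
    simp [el, e1, e2, e3, e4, e5, e6, e7, e8, e9, Pi.single_apply]
  have c8 : ∀ x : Fin 10 → ℤ, ι x 8 = x 8 := by
    intro x
    rw [happ x]
    simp [el, e1, e2, e3, e4, e5, e6, e7, e8, e9, Pi.single_apply]
  have c9 : ∀ x : Fin 10 → ℤ, ι x 9 = x 9 := by
    intro x
    rw [happ x]
    simp [el, e1, e2, e3, e4, e5, e6, e7, e8, e9, Pi.single_apply]
  have sum10 : ∀ g : Fin 10 → ℤ, ∑ i, g i =
      g 0 + g 1 + g 2 + g 3 + g 4 + g 5 + g 6 + g 7 + g 8 + g 9 := by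
    intro g
    simp [Fin.sum_univ_succ, Fin.succ]
    ring
  refine ⟨?_, ?_, ?_, ?_, ?_, ?_, ?_⟩
  · intro x
    rw [happ (ι x), c0, c1, c2, c3, c4, c5, c6, c7, c8, c9]
    conv_rhs => rw [hrep x]
    try module
  · intro x y
    simp only [form, sum10, c0, c1, c2, c3, c4, c5, c6, c7, c8, c9]
    ring
  · rw [show (ff : Fin 10 → ℤ) = (3:ℤ) • el - (e1 + e2 + e3 + e4 + e5 + e6 + e7 + e8 + e9) from rfl]
    simp only [map_sub, map_add, map_smul, hl, h1, h2, h3, h4, h5, h6, h7, h8, h9, ff]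
    try module
  · rw [show (n1 : Fin 10 → ℤ) = e8 - e9 from rfl]
    simp only [map_sub, map_add, map_smul, hl, h1, h2, h3, h4, h5, h6, h7, h8, h9, ff]
    try module
  · rw [show (n2 : Fin 10 → ℤ) = el - e7 - e8 - e9 from rfl]
    simp only [map_sub, map_add, map_smul, hl, h1, h2, h3, h4, h5, h6, h7, h8, h9, ff]
    try module
  · rw [show (o1 : Fin 10 → ℤ) = ff - e8 + e9 from rfl, ff]
    simp only [map_sub, map_add, map_smul, hl, h1, h2, h3, h4, h5, h6, h7, h8, h9, ff]
    try module
  · rw [show (o2 : Fin 10 → ℤ) = (2:ℤ) • el - (e1 + e2 + e3 + e4 + e5 + e6) from rfl]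
    simp only [map_sub, map_add, map_smul, hl, h1, h2, h3, h4, h5, h6, h7, h8, h9, ff]
    try module
end
end

section
/- The ℤ-linear map a : L → L defined on the basis by a(ℓ) = 3ℓ − (e₁+e₂+e₃+2e₇+e₈), a(eᵢ) = ℓ − eᵢ − e₇ for i = 1,2,3, a(eᵢ) = eᵢ for i = 4,5,6, a(e₇) = 2ℓ − (e₁+e₂+e₃+e₇+e₈), a(e₈) = ℓ − e₇ − e₈, a(e₉) = e₉ (the action of the involution α_B on H²(B,ℤ), Table 1 of the paper) satisfies: a ∘ a = id, ⟨a(x), a(y)⟩ = ⟨x, y⟩ for all x, y ∈ L, a(f) = f, a(o₁) = o₂, a(o₂) = o₁, a(n₁) = n₂ and a(n₂) = n₁. -/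
/-! Statement 1: the involution `α_B` acting on `H²(B,ℤ)` (Table 1) is an involution,
preserves the intersection form, fixes `f`, and swaps `o₁ ↔ o₂`, `n₁ ↔ n₂`. -/

noncomputable section

def Amap (x : Fin 10 → ℤ) : Fin 10 → ℤ
  | 0 => 3*x 0 + x 1 + x 2 + x 3 + 2*x 7 + x 8
  | 1 => -x 0 - x 1 - x 7
  | 2 => -x 0 - x 2 - x 7
  | 3 => -x 0 - x 3 - x 7
  | 4 => x 4
  | 5 => x 5
  | 6 => x 6
  | 7 => -2*x 0 - x 1 - x 2 - x 3 - x 7 - x 8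
  | 8 => -x 0 - x 7 - x 8
  | 9 => x 9

lemma formEval (x y : Fin 10 → ℤ) :
    form x y = 2 * x 0 * y 0 - (x 0 * y 0 + x 1 * y 1 + x 2 * y 2 + x 3 * y 3 + x 4 * y 4
      + x 5 * y 5 + x 6 * y 6 + x 7 * y 7 + x 8 * y 8 + x 9 * y 9) := by
  have huniv : (Finset.univ : Finset (Fin 10)) = {0,1,2,3,4,5,6,7,8,9} := by decide
  rw [form, huniv]
  repeat rw [Finset.sum_insert (by decide)]
  rw [Finset.sum_singleton]
  ring

lemma decomp (x : Fin 10 → ℤ) :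
    x = x 0 • el + x 1 • e1 + x 2 • e2 + x 3 • e3 + x 4 • e4 + x 5 • e5 + x 6 • e6
      + x 7 • e7 + x 8 • e8 + x 9 • e9 := by
  funext i
  fin_cases i <;>
    simp [el, e1, e2, e3, e4, e5, e6, e7, e8, e9, Pi.single_apply]

set_option maxHeartbeats 1000000 in
theorem stmt1 (a : (Fin 10 → ℤ) →ₗ[ℤ] (Fin 10 → ℤ))
    (hl : a el = (3 : ℤ) • el - (e1 + e2 + e3 + (2 : ℤ) • e7 + e8))
    (h1 : a e1 = el - e1 - e7) (h2 : a e2 = el - e2 - e7) (h3 : a e3 = el - e3 - e7)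
    (h4 : a e4 = e4) (h5 : a e5 = e5) (h6 : a e6 = e6)
    (h7 : a e7 = (2 : ℤ) • el - (e1 + e2 + e3 + e7 + e8))
    (h8 : a e8 = el - e7 - e8) (h9 : a e9 = e9) :
    (∀ x, a (a x) = x) ∧
    (∀ x y, form (a x) (a y) = form x y) ∧
    a ff = ff ∧ a o1 = o2 ∧ a o2 = o1 ∧ a n1 = n2 ∧ a n2 = n1 := by
  have key : ∀ x, a x = Amap x := by
    intro x
    conv_lhs => rw [decomp x]
    simp only [map_add, map_smul, hl, h1, h2, h3, h4, h5, h6, h7, h8, h9]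
    funext j
    fin_cases j <;>
      simp [Amap, el, e1, e2, e3, e4, e5, e6, e7, e8, e9, Pi.single_apply] <;> ring
  refine ⟨?_, ?_, ?_, ?_, ?_, ?_, ?_⟩
  · intro x
    rw [key, key]
    funext j
    fin_cases j <;> simp [Amap] <;> ring
  · intro x y
    rw [key, key]
    simp only [formEval]
    simp only [Amap]
    ring
  all_goals
    rw [key]
    funext j
    fin_cases j <;>
      simp [Amap, ff, o1, o2, n1, n2, el, e1, e2, e3, e4, e5, e6, e7, e8, e9,
        Pi.single_apply] <;> ring
end
end

section
/- The ℤ-linear map t : L → L defined on the basis by t(ℓ) = 2f + 2ℓ − 3e₁ − e₇ − e₈ + 2e₉, t(e₁) = e₉, t(eᵢ) = f + eᵢ − e₁ + e₉ for i = 2,…,6, t(e₇) = ℓ − e₁ − e₈, t(e₈) = f + ℓ + e₉ − e₁ − e₇ − e₈, t(e₉) = ℓ − e₁ − e₇ (the action of the translation t_ζ by the section ζ = e₁ on H²(B,ℤ), Table 1 of the paper) satisfies: ⟨t(x), t(y)⟩ = ⟨x, y⟩ for all x, y ∈ L, t(f) = f, t(n₁) = o₁, t(o₁) = n₁, t(n₂)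 = o₂ and t(o₂) = n₂. -/
/-! Statement 2: the translation `t_ζ` (ζ = e₁) acting on `H²(B,ℤ)` (Table 1)
preserves the intersection form, fixes `f`, and swaps `n₁ ↔ o₁`, `n₂ ↔ o₂`. -/

noncomputable section

theorem sum10 {β : Type*} [AddCommMonoid β] (f : Fin 10 → β) :
    ∑ i, f i = f 0 + f 1 + f 2 + f 3 + f 4 + f 5 + f 6 + f 7 + f 8 + f 9 := by
  rw [Fin.sum_univ_castSucc, Fin.sum_univ_castSucc, Fin.sum_univ_eight]
  rfl

set_option maxHeartbeats 1000000 in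
theorem form_key (x y : Fin 10 → ℤ) :
    form (x 0 • ((2 : ℤ) • ff + (2 : ℤ) • el - (3 : ℤ) • e1 - e7 - e8 + (2 : ℤ) • e9)
      + x 1 • e9 + x 2 • (ff + e2 - e1 + e9) + x 3 • (ff + e3 - e1 + e9)
      + x 4 • (ff + e4 - e1 + e9) + x 5 • (ff + e5 - e1 + e9) + x 6 • (ff + e6 - e1 + e9)
      + x 7 • (el - e1 - e8) + x 8 • (ff + el + e9 - e1 - e7 - e8) + x 9 • (el - e1 - e7))
      (y 0 • ((2 : ℤ) • ff + (2 : ℤ) • el - (3 : ℤ) • e1 - e7 - e8 + (2 : ℤ) • e9)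
      + y 1 • e9 + y 2 • (ff + e2 - e1 + e9) + y 3 • (ff + e3 - e1 + e9)
      + y 4 • (ff + e4 - e1 + e9) + y 5 • (ff + e5 - e1 + e9) + y 6 • (ff + e6 - e1 + e9)
      + y 7 • (el - e1 - e8) + y 8 • (ff + el + e9 - e1 - e7 - e8) + y 9 • (el - e1 - e7))
    = form x y := by
  simp only [form, sum10, ff, el, e1, e2, e3, e4, e5, e6, e7, e8, e9,
    Pi.add_apply, Pi.sub_apply, Pi.smul_apply, smul_eq_mul, Pi.single_apply]
  norm_num (config := { decide := true })
  ring

set_option maxHeartbeats 1000000 in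
theorem stmt2 (t : (Fin 10 → ℤ) →ₗ[ℤ] (Fin 10 → ℤ))
    (hl : t el = (2 : ℤ) • ff + (2 : ℤ) • el - (3 : ℤ) • e1 - e7 - e8 + (2 : ℤ) • e9)
    (h1 : t e1 = e9)
    (h2 : t e2 = ff + e2 - e1 + e9) (h3 : t e3 = ff + e3 - e1 + e9)
    (h4 : t e4 = ff + e4 - e1 + e9) (h5 : t e5 = ff + e5 - e1 + e9)
    (h6 : t e6 = ff + e6 - e1 + e9)
    (h7 : t e7 = el - e1 - e8)
    (h8 : t e8 = ff + el + e9 - e1 - e7 - e8)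
    (h9 : t e9 = el - e1 - e7) :
    (∀ x y, form (t x) (t y) = form x y) ∧
    t ff = ff ∧ t n1 = o1 ∧ t o1 = n1 ∧ t n2 = o2 ∧ t o2 = n2 := by
  have hrep : ∀ x : Fin 10 → ℤ, t x =
      x 0 • ((2 : ℤ) • ff + (2 : ℤ) • el - (3 : ℤ) • e1 - e7 - e8 + (2 : ℤ) • e9)
      + x 1 • e9 + x 2 • (ff + e2 - e1 + e9) + x 3 • (ff + e3 - e1 + e9)
      + x 4 • (ff + e4 - e1 + e9) + x 5 • (ff + e5 - e1 + e9) + x 6 • (ff + e6 - e1 + e9)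
      + x 7 • (el - e1 - e8) + x 8 • (ff + el + e9 - e1 - e7 - e8)
      + x 9 • (el - e1 - e7) := by
    intro x
    have hx : x = x 0 • el + x 1 • e1 + x 2 • e2 + x 3 • e3 + x 4 • e4 +
        x 5 • e5 + x 6 • e6 + x 7 • e7 + x 8 • e8 + x 9 • e9 := by
      funext j
      fin_cases j <;>
        simp [el, e1, e2, e3, e4, e5, e6, e7, e8, e9, Pi.single_apply]
    conv_lhs => rw [hx]
    simp only [map_add, map_smul, hl, h1, h2, h3, h4, h5, h6, h7, h8, h9]
  refine ⟨fun x y => by rw [hrep x, hrep y]; exact form_key x y, ?_, ?_, ?_, ?_, ?_⟩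
  · rw [hrep ff]; decide
  · rw [hrep n1]; decide
  · rw [hrep o1]; decide
  · rw [hrep n2]; decide
  · rw [hrep o2]; decide
end
end

section
/- Let a, t : L → L be as above and let τ = a ∘ t. Then τ is given on the basis by τ(ℓ) = 2f + 2(e₁+e₉) − (e₂+e₃) + e₇, τ(e₁) = e₉, τ(e_j) = f − e_j + e₁ + e₉ for j = 2,3, τ(eᵢ) = f − ℓ + eᵢ + e₁ + e₇ + e₉ for i = 4,5,6, τ(e₇) = ℓ − e₂ − e₃, τ(e₈) = f − ℓ + e₁ + e₇ + e₈ + e₉, τ(e₉) = e₁ (the τ_B column of Table 1 of the paper); moreover τ ∘ τ = id, ⟨τ(x), τ(y)⟩ = ⟨x, y⟩ for all x, y ∈ L, and τ(f) = f. -/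
/-! Statement 3: with `a = α_B^*` and `t = t_ζ^*` as in Table 1, the composite
`τ = a ∘ t` is given by the `τ_B` column of Table 1, is an involution,
preserves the intersection form, and fixes `f`. -/

noncomputable section

/-! The maps `a` and `t` are determined by their values on the basis `ℓ, e₁, …, e₉`, so `τ = a ∘ t`
is the linear map of the product of their matrices (each written as `(of v)ᵀ`, whose columns `v i`
are the images of the basis vectors). All claims about `τ` then become identities
between explicit integer matrices: `T * T = 1`, `Tᵀ * Q * T = Q` for the Gram matrix `Q` of the
intersection form, and `T *ᵥ f = f`, which are settled by evaluation. -/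

open Matrix

section

variable {n R : Type*} [Fintype n] [CommRing R]

theorem Matrix.toLin'_of_transpose_single [DecidableEq n] (v : n → n → R) (i : n) :
    toLin' (of v)ᵀ (Pi.single i 1) = v i := by
  rw [toLin'_apply, mulVec_single_one]
  rfl

theorem LinearMap.eq_toLin'_of_apply_single [DecidableEq n] (f : (n → R) →ₗ[R] n → R)
    (v : n → n → R) (h : ∀ i, f (Pi.single i 1) = v i) : f = toLin' (of v)ᵀ :=
  (Pi.basisFun R n).ext fun i => by
    rw [Pi.basisFun_apply, h, toLin'_of_transpose_single]

theorem Matrix.dotProduct_mulVec_mulVec_of_transpose_mul_mul_self {T Q : Matrix n n R}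
    (h : Tᵀ * Q * T = Q) (x y : n → R) : (T *ᵥ x) ⬝ᵥ (Q *ᵥ (T *ᵥ y)) = x ⬝ᵥ (Q *ᵥ y) := by
  rw [dotProduct_mulVec, ← vecMul_transpose, vecMul_vecMul, ← dotProduct_mulVec, mulVec_mulVec,
    mul_assoc, ← Matrix.mul_assoc, h]

end

def alphaMatrix : Matrix (Fin 10) (Fin 10) ℤ :=
  (of ![(3 : ℤ) • el - (e1 + e2 + e3 + (2 : ℤ) • e7 + e8), el - e1 - e7, el - e2 - e7,
    el - e3 - e7, e4, e5, e6, (2 : ℤ) • el - (e1 + e2 + e3 + e7 + e8), el - e7 - e8, e9])ᵀ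

def translationMatrix : Matrix (Fin 10) (Fin 10) ℤ :=
  (of ![(2 : ℤ) • ff + (2 : ℤ) • el - (3 : ℤ) • e1 - e7 - e8 + (2 : ℤ) • e9, e9,
    ff + e2 - e1 + e9, ff + e3 - e1 + e9, ff + e4 - e1 + e9, ff + e5 - e1 + e9,
    ff + e6 - e1 + e9, el - e1 - e8, ff + el + e9 - e1 - e7 - e8, el - e1 - e7])ᵀ

def tauMatrix : Matrix (Fin 10) (Fin 10) ℤ :=
  (of ![(2 : ℤ) • ff + (2 : ℤ) • (e1 + e9) - (e2 + e3) + e7, e9, ff - e2 + e1 + e9,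
    ff - e3 + e1 + e9, ff - el + e4 + e1 + e7 + e9, ff - el + e5 + e1 + e7 + e9,
    ff - el + e6 + e1 + e7 + e9, el - e2 - e3, ff - el + e1 + e7 + e8 + e9, e1])ᵀ

def intersectionMatrix : Matrix (Fin 10) (Fin 10) ℤ :=
  diagonal ![1, -1, -1, -1, -1, -1, -1, -1, -1, -1]

theorem form_eq_dotProduct_mulVec (x y : Fin 10 → ℤ) :
    form x y = x ⬝ᵥ (intersectionMatrix *ᵥ y) := by
  simp only [form, dotProduct, intersectionMatrix, mulVec_diagonal, Fin.sum_univ_succ,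
    Fin.sum_univ_zero, cons_val_zero, cons_val_succ]
  ring

theorem alphaMatrix_mul_translationMatrix : alphaMatrix * translationMatrix = tauMatrix := by
  decide

theorem tauMatrix_mul_self : tauMatrix * tauMatrix = 1 := by
  decide

theorem transpose_tauMatrix_mul_intersectionMatrix_mul_tauMatrix :
    tauMatrixᵀ * intersectionMatrix * tauMatrix = intersectionMatrix := by
  decide

theorem tauMatrix_mulVec_ff : tauMatrix *ᵥ ff = ff := by
  decide

theorem stmt3 (a t : (Fin 10 → ℤ) →ₗ[ℤ] (Fin 10 → ℤ))
    (hal : a el = (3 : ℤ) • el - (e1 + e2 + e3 + (2 : ℤ) • e7 + e8))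
    (ha1 : a e1 = el - e1 - e7) (ha2 : a e2 = el - e2 - e7) (ha3 : a e3 = el - e3 - e7)
    (ha4 : a e4 = e4) (ha5 : a e5 = e5) (ha6 : a e6 = e6)
    (ha7 : a e7 = (2 : ℤ) • el - (e1 + e2 + e3 + e7 + e8))
    (ha8 : a e8 = el - e7 - e8) (ha9 : a e9 = e9)
    (htl : t el = (2 : ℤ) • ff + (2 : ℤ) • el - (3 : ℤ) • e1 - e7 - e8 + (2 : ℤ) • e9)
    (ht1 : t e1 = e9)
    (ht2 : t e2 = ff + e2 - e1 + e9) (ht3 : t e3 = ff + e3 - e1 + e9)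
    (ht4 : t e4 = ff + e4 - e1 + e9) (ht5 : t e5 = ff + e5 - e1 + e9)
    (ht6 : t e6 = ff + e6 - e1 + e9)
    (ht7 : t e7 = el - e1 - e8)
    (ht8 : t e8 = ff + el + e9 - e1 - e7 - e8)
    (ht9 : t e9 = el - e1 - e7) :
    (a ∘ₗ t) el = (2 : ℤ) • ff + (2 : ℤ) • (e1 + e9) - (e2 + e3) + e7 ∧
    (a ∘ₗ t) e1 = e9 ∧
    (a ∘ₗ t) e2 = ff - e2 + e1 + e9 ∧
    (a ∘ₗ t) e3 = ff - e3 + e1 + e9 ∧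
    (a ∘ₗ t) e4 = ff - el + e4 + e1 + e7 + e9 ∧
    (a ∘ₗ t) e5 = ff - el + e5 + e1 + e7 + e9 ∧
    (a ∘ₗ t) e6 = ff - el + e6 + e1 + e7 + e9 ∧
    (a ∘ₗ t) e7 = el - e2 - e3 ∧
    (a ∘ₗ t) e8 = ff - el + e1 + e7 + e8 + e9 ∧
    (a ∘ₗ t) e9 = e1 ∧
    (∀ x, (a ∘ₗ t) ((a ∘ₗ t) x) = x) ∧
    (∀ x y, form ((a ∘ₗ t) x) ((a ∘ₗ t) y) = form x y) ∧
    (a ∘ₗ t) ff = ff := by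
  have ha : a = toLin' alphaMatrix :=
    a.eq_toLin'_of_apply_single _ fun i => by fin_cases i <;> assumption
  have ht : t = toLin' translationMatrix :=
    t.eq_toLin'_of_apply_single _ fun i => by fin_cases i <;> assumption
  have hτ : a ∘ₗ t = toLin' tauMatrix := by
    rw [ha, ht, ← toLin'_mul, alphaMatrix_mul_translationMatrix]
  rw [hτ]
  refine ⟨toLin'_of_transpose_single _ 0, toLin'_of_transpose_single _ 1,
    toLin'_of_transpose_single _ 2, toLin'_of_transpose_single _ 3,
    toLin'_of_transpose_single _ 4, toLin'_of_transpose_single _ 5,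
    toLin'_of_transpose_single _ 6, toLin'_of_transpose_single _ 7,
    toLin'_of_transpose_single _ 8, toLin'_of_transpose_single _ 9,
    fun x => ?_, fun x y => ?_, ?_⟩
  · rw [← toLin'_mul_apply, tauMatrix_mul_self, toLin'_one, LinearMap.id_apply]
  · simp only [toLin'_apply, form_eq_dotProduct_mulVec]
    exact dotProduct_mulVec_mulVec_of_transpose_mul_mul_self
      transpose_tauMatrix_mul_intersectionMatrix_mul_tauMatrix x y
  · rw [toLin'_apply, tauMatrix_mulVec_ff]
end
end

section
/- The ℤ-linear map Ω : L → L defined by Ω(x) = τ(x) + ⟨x, e₉ − e₁⟩·f + ⟨x, f⟩·(e₉ − e₁ + f) (the linear part of the affine spectral involution T̃_B on Pic(B)) satisfies: Ω ∘ Ω = id, ⟨Ω(x), Ω(y)⟩ = ⟨x, y⟩ for all x, y ∈ L, Ω(o₁) = −o₂ and Ω(o₂) = −o₁. -/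
/-! Statement 7: the linear part `Ω(x) = τ(x) + ⟨x, e₉-e₁⟩f + ⟨x,f⟩(e₉-e₁+f)` of the
affine spectral involution is an involutive isometry of the lattice with
`Ω(o₁) = -o₂` and `Ω(o₂) = -o₁`. -/

set_option maxHeartbeats 1000000

noncomputable section

/-- The linear part of the affine spectral involution `T̃_B`. -/
def Omega (tau : (Fin 10 → ℤ) →ₗ[ℤ] (Fin 10 → ℤ)) (x : Fin 10 → ℤ) : Fin 10 → ℤ :=
  tau x + form x (e9 - e1) • ff + form x ff • (e9 - e1 + ff)

theorem stmt7 (tau : (Fin 10 → ℤ) →ₗ[ℤ] (Fin 10 → ℤ))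
    (htl : tau el = (2 : ℤ) • ff + (2 : ℤ) • (e1 + e9) - (e2 + e3) + e7)
    (ht1 : tau e1 = e9)
    (ht2 : tau e2 = ff - e2 + e1 + e9)
    (ht3 : tau e3 = ff - e3 + e1 + e9)
    (ht4 : tau e4 = ff - el + e4 + e1 + e7 + e9)
    (ht5 : tau e5 = ff - el + e5 + e1 + e7 + e9)
    (ht6 : tau e6 = ff - el + e6 + e1 + e7 + e9)
    (ht7 : tau e7 = el - e2 - e3)
    (ht8 : tau e8 = ff - el + e1 + e7 + e8 + e9)
    (ht9 : tau e9 = e1)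
    :
    (∀ x, Omega tau (Omega tau x) = x) ∧
    (∀ x y, form (Omega tau x) (Omega tau y) = form x y) ∧
    Omega tau o1 = -o2 ∧ Omega tau o2 = -o1 := by
  have hext : ∀ a b : Fin 10 → ℤ, a 0 = b 0 → a 1 = b 1 → a 2 = b 2 → a 3 = b 3 →
      a 4 = b 4 → a 5 = b 5 → a 6 = b 6 → a 7 = b 7 → a 8 = b 8 → a 9 = b 9 → a = b := by
    intro a b h0 h1 h2 h3 h4 h5 h6 h7 h8 h9
    funext j
    fin_cases j
    exacts [h0, h1, h2, h3, h4, h5, h6, h7, h8, h9]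
  have hform : ∀ x y : Fin 10 → ℤ, form x y = 2 * x 0 * y 0 -
      (x 0 * y 0 + x 1 * y 1 + x 2 * y 2 + x 3 * y 3 + x 4 * y 4 + x 5 * y 5 +
       x 6 * y 6 + x 7 * y 7 + x 8 * y 8 + x 9 * y 9) := by
    intro x y
    have hsum : ∀ g : Fin 10 → ℤ, ∑ i, g i =
        g 0 + g 1 + g 2 + g 3 + g 4 + g 5 + g 6 + g 7 + g 8 + g 9 := by
      intro g
      rw [Fin.sum_univ_castSucc, Fin.sum_univ_castSucc, Fin.sum_univ_eight]
      rfl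
    simp only [form, hsum]
  have hx : ∀ x : Fin 10 → ℤ, x = x 0 • el + x 1 • e1 + x 2 • e2 + x 3 • e3 +
      x 4 • e4 + x 5 • e5 + x 6 • e6 + x 7 • e7 + x 8 • e8 + x 9 • e9 := by
    intro x
    funext j
    fin_cases j <;>
      simp [el, e1, e2, e3, e4, e5, e6, e7, e8, e9, Pi.single_apply]
  have htau : ∀ x : Fin 10 → ℤ, tau x =
      x 0 • ((2 : ℤ) • ff + (2 : ℤ) • (e1 + e9) - (e2 + e3) + e7) +
      x 1 • e9 + x 2 • (ff - e2 + e1 + e9) + x 3 • (ff - e3 + e1 + e9) +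
      x 4 • (ff - el + e4 + e1 + e7 + e9) + x 5 • (ff - el + e5 + e1 + e7 + e9) +
      x 6 • (ff - el + e6 + e1 + e7 + e9) + x 7 • (el - e2 - e3) +
      x 8 • (ff - el + e1 + e7 + e8 + e9) + x 9 • e1 := by
    intro x
    conv_lhs => rw [hx x]
    simp only [map_add, map_smul, htl, ht1, ht2, ht3, ht4, ht5, ht6, ht7, ht8, ht9]
  have hO0 : ∀ x : Fin 10 → ℤ, Omega tau x (0 : Fin 10) = (15) * x 0 + (6) * x 1 + (6) * x 2 + (6) * x 3 + (5) * x 4 + (5) * x 5 + (5) * x 6 + (4) * x 7 + (5) * x 8 + (0) * x 9 := by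
    intro x
    simp only [Omega, htau, hform]
    simp [el, e1, e2, e3, e4, e5, e6, e7, e8, e9, ff, Pi.single_apply]
    try ring
  have hO1 : ∀ x : Fin 10 → ℤ, Omega tau x (1 : Fin 10) = (-6) * x 0 + (-3) * x 1 + (-2) * x 2 + (-2) * x 3 + (-2) * x 4 + (-2) * x 5 + (-2) * x 6 + (-2) * x 7 + (-2) * x 8 + (0) * x 9 := by
    intro x
    simp only [Omega, htau, hform]
    simp [el, e1, e2, e3, e4, e5, e6, e7, e8, e9, ff, Pi.single_apply]
    try ring
  have hO2 : ∀ x : Fin 10 → ℤ, Omega tau x (2 : Fin 10) = (-6) * x 0 + (-2) * x 1 + (-3) * x 2 + (-2) * x 3 + (-2) * x 4 + (-2) * x 5 + (-2) * x 6 + (-2) * x 7 + (-2) * x 8 + (0) * x 9 := by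
    intro x
    simp only [Omega, htau, hform]
    simp [el, e1, e2, e3, e4, e5, e6, e7, e8, e9, ff, Pi.single_apply]
    try ring
  have hO3 : ∀ x : Fin 10 → ℤ, Omega tau x (3 : Fin 10) = (-6) * x 0 + (-2) * x 1 + (-2) * x 2 + (-3) * x 3 + (-2) * x 4 + (-2) * x 5 + (-2) * x 6 + (-2) * x 7 + (-2) * x 8 + (0) * x 9 := by
    intro x
    simp only [Omega, htau, hform]
    simp [el, e1, e2, e3, e4, e5, e6, e7, e8, e9, ff, Pi.single_apply]
    try ring
  have hO4 : ∀ x : Fin 10 → ℤ, Omega tau x (4 : Fin 10) = (-5) * x 0 + (-2) * x 1 + (-2) * x 2 + (-2) * x 3 + (-1) * x 4 + (-2) * x 5 + (-2) * x 6 + (-1) * x 7 + (-2) * x 8 + (0) * x 9 := by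
    intro x
    simp only [Omega, htau, hform]
    simp [el, e1, e2, e3, e4, e5, e6, e7, e8, e9, ff, Pi.single_apply]
    try ring
  have hO5 : ∀ x : Fin 10 → ℤ, Omega tau x (5 : Fin 10) = (-5) * x 0 + (-2) * x 1 + (-2) * x 2 + (-2) * x 3 + (-2) * x 4 + (-1) * x 5 + (-2) * x 6 + (-1) * x 7 + (-2) * x 8 + (0) * x 9 := by
    intro x
    simp only [Omega, htau, hform]
    simp [el, e1, e2, e3, e4, e5, e6, e7, e8, e9, ff, Pi.single_apply]
    try ring
  have hO6 : ∀ x : Fin 10 → ℤ, Omega tau x (6 : Fin 10) = (-5) * x 0 + (-2) * x 1 + (-2) * x 2 + (-2) * x 3 + (-2) * x 4 + (-2) * x 5 + (-1) * x 6 + (-1) * x 7 + (-2) * x 8 + (0) * x 9 := by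
    intro x
    simp only [Omega, htau, hform]
    simp [el, e1, e2, e3, e4, e5, e6, e7, e8, e9, ff, Pi.single_apply]
    try ring
  have hO7 : ∀ x : Fin 10 → ℤ, Omega tau x (7 : Fin 10) = (-4) * x 0 + (-2) * x 1 + (-2) * x 2 + (-2) * x 3 + (-1) * x 4 + (-1) * x 5 + (-1) * x 6 + (-1) * x 7 + (-1) * x 8 + (0) * x 9 := by
    intro x
    simp only [Omega, htau, hform]
    simp [el, e1, e2, e3, e4, e5, e6, e7, e8, e9, ff, Pi.single_apply]
    try ring
  have hO8 : ∀ x : Fin 10 → ℤ, Omega tau x (8 : Fin 10) = (-5) * x 0 + (-2) * x 1 + (-2) * x 2 + (-2) * x 3 + (-2) * x 4 + (-2) * x 5 + (-2) * x 6 + (-1) * x 7 + (-1) * x 8 + (0) * x 9 := by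
    intro x
    simp only [Omega, htau, hform]
    simp [el, e1, e2, e3, e4, e5, e6, e7, e8, e9, ff, Pi.single_apply]
    try ring
  have hO9 : ∀ x : Fin 10 → ℤ, Omega tau x (9 : Fin 10) = (0) * x 0 + (0) * x 1 + (0) * x 2 + (0) * x 3 + (0) * x 4 + (0) * x 5 + (0) * x 6 + (0) * x 7 + (0) * x 8 + (1) * x 9 := by
    intro x
    simp only [Omega, htau, hform]
    simp [el, e1, e2, e3, e4, e5, e6, e7, e8, e9, ff, Pi.single_apply]
    try ring
  refine ⟨?_, ?_, ?_, ?_⟩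
  · intro x
    refine hext _ _ ?_ ?_ ?_ ?_ ?_ ?_ ?_ ?_ ?_ ?_ <;>
      (simp only [hO0, hO1, hO2, hO3, hO4, hO5, hO6, hO7, hO8, hO9]; ring)
  · intro x y
    rw [hform, hform]
    simp only [hO0, hO1, hO2, hO3, hO4, hO5, hO6, hO7, hO8, hO9]
    ring
  · refine hext _ _ ?_ ?_ ?_ ?_ ?_ ?_ ?_ ?_ ?_ ?_ <;>
      (simp only [hO0, hO1, hO2, hO3, hO4, hO5, hO6, hO7, hO8, hO9] <;>
        simp [o1, o2, ff, el, e1, e2, e3, e4, e5, e6, e7, e8, e9, Pi.single_apply])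
  · refine hext _ _ ?_ ?_ ?_ ?_ ?_ ?_ ?_ ?_ ?_ ?_ <;>
      (simp only [hO0, hO1, hO2, hO3, hO4, hO5, hO6, hO7, hO8, hO9] <;>
        simp [o1, o2, ff, el, e1, e2, e3, e4, e5, e6, e7, e8, e9, Pi.single_apply])
end
end

section
/- For every x ∈ L with ⟨x, o₁⟩ = 0 and ⟨x, o₂⟩ = 0, one has Ω(x) = a(x); that is, on the orthogonal complement of the span of o₁ and o₂ the linear part of the spectral involution coincides with the action of the involution α_B on H²(B,ℤ). -/
noncomputable section

/-!
A direct computation on the basis `ℓ, e₁, …, e₉` shows that `Ω - a` is the symmetric map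
`x ↦ ⟨x, o₁⟩ o₂ + ⟨x, o₂⟩ o₁`; in particular it vanishes on the orthogonal complement of
`o₁` and `o₂`.
-/

theorem LinearMap.ext_el_e {M : Type*} [AddCommGroup M] [Module ℤ M]
    {f g : (Fin 10 → ℤ) →ₗ[ℤ] M}
    (h0 : f el = g el) (h1 : f e1 = g e1) (h2 : f e2 = g e2) (h3 : f e3 = g e3)
    (h4 : f e4 = g e4) (h5 : f e5 = g e5) (h6 : f e6 = g e6) (h7 : f e7 = g e7)
    (h8 : f e8 = g e8) (h9 : f e9 = g e9) : f = g := by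
  refine (Pi.basisFun ℤ (Fin 10)).ext fun i => ?_
  fin_cases i <;> simp only [Pi.basisFun_apply] <;> assumption

@[simps]
def formLeft (y : Fin 10 → ℤ) : (Fin 10 → ℤ) →ₗ[ℤ] ℤ where
  toFun x := form x y
  map_add' x x' := by
    simp only [form, Pi.add_apply, add_mul, Finset.sum_add_distrib]
    ring
  map_smul' c x := by
    simp only [form, Pi.smul_apply, smul_eq_mul, RingHom.id_apply, mul_assoc, ← Finset.mul_sum]
    ring

def omegaLin (tau : (Fin 10 → ℤ) →ₗ[ℤ] (Fin 10 → ℤ)) : (Fin 10 → ℤ) →ₗ[ℤ] (Fin 10 → ℤ) :=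
  tau + (formLeft (e9 - e1)).smulRight ff + (formLeft ff).smulRight (e9 - e1 + ff)

theorem stmt8 (tau a : (Fin 10 → ℤ) →ₗ[ℤ] (Fin 10 → ℤ))
    (htl : tau el = (2 : ℤ) • ff + (2 : ℤ) • (e1 + e9) - (e2 + e3) + e7)
    (ht1 : tau e1 = e9)
    (ht2 : tau e2 = ff - e2 + e1 + e9)
    (ht3 : tau e3 = ff - e3 + e1 + e9)
    (ht4 : tau e4 = ff - el + e4 + e1 + e7 + e9)
    (ht5 : tau e5 = ff - el + e5 + e1 + e7 + e9)
    (ht6 : tau e6 = ff - el + e6 + e1 + e7 + e9)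
    (ht7 : tau e7 = el - e2 - e3)
    (ht8 : tau e8 = ff - el + e1 + e7 + e8 + e9)
    (ht9 : tau e9 = e1)
    (hal : a el = (3 : ℤ) • el - (e1 + e2 + e3 + (2 : ℤ) • e7 + e8))
    (ha1 : a e1 = el - e1 - e7) (ha2 : a e2 = el - e2 - e7) (ha3 : a e3 = el - e3 - e7)
    (ha4 : a e4 = e4) (ha5 : a e5 = e5) (ha6 : a e6 = e6)
    (ha7 : a e7 = (2 : ℤ) • el - (e1 + e2 + e3 + e7 + e8))
    (ha8 : a e8 = el - e7 - e8) (ha9 : a e9 = e9)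
    :
    ∀ x : Fin 10 → ℤ, form x o1 = 0 → form x o2 = 0 → Omega tau x = a x := by
  have omega_sub : omegaLin tau - a = (formLeft o1).smulRight o2 + (formLeft o2).smulRight o1 := by
    apply LinearMap.ext_el_e <;>
      simp only [omegaLin, LinearMap.add_apply, LinearMap.sub_apply,
        LinearMap.smulRight_apply, formLeft_apply,
        htl, ht1, ht2, ht3, ht4, ht5, ht6, ht7, ht8, ht9,
        hal, ha1, ha2, ha3, ha4, ha5, ha6, ha7, ha8, ha9] <;>
      decide
  intro x h1 h2
  have hx : Omega tau x - a x = form x o1 • o2 + form x o2 • o1 :=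
    LinearMap.congr_fun omega_sub x
  rw [h1, h2, zero_smul, zero_smul, add_zero] at hx
  exact sub_eq_zero.mp hx
end
end

section
/- For every x ∈ L, the difference Ω(x) − a(x) lies in the subgroup ℤo₁ + ℤo₂ of L. (This is Corollary 7.2 at the level of the Picard lattice: the spectral involution satisfies T̃_B(L) = α_B*(L) ⊗ O_B(e − ζ + f) modulo the classes o₁, o₂.) -/
/-! Statement 9: for every `x`, `Ω(x) - a(x)` lies in the subgroup `ℤo₁ + ℤo₂`
(Corollary 7.2 at the level of the Picard lattice). -/

noncomputable section

lemma sum_ten (g : Fin 10 → ℤ) :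
    ∑ i, g i = g 0 + g 1 + g 2 + g 3 + g 4 + g 5 + g 6 + g 7 + g 8 + g 9 := by
  show Finset.sum _ _ = _
  rw [show (Finset.univ : Finset (Fin 10)) = {0,1,2,3,4,5,6,7,8,9} by decide]
  simp [Finset.sum_insert, Finset.mem_insert]
  ring

set_option maxHeartbeats 2000000 in
theorem stmt9 (tau a : (Fin 10 → ℤ) →ₗ[ℤ] (Fin 10 → ℤ))
    (htl : tau el = (2 : ℤ) • ff + (2 : ℤ) • (e1 + e9) - (e2 + e3) + e7)
    (ht1 : tau e1 = e9)
    (ht2 : tau e2 = ff - e2 + e1 + e9)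
    (ht3 : tau e3 = ff - e3 + e1 + e9)
    (ht4 : tau e4 = ff - el + e4 + e1 + e7 + e9)
    (ht5 : tau e5 = ff - el + e5 + e1 + e7 + e9)
    (ht6 : tau e6 = ff - el + e6 + e1 + e7 + e9)
    (ht7 : tau e7 = el - e2 - e3)
    (ht8 : tau e8 = ff - el + e1 + e7 + e8 + e9)
    (ht9 : tau e9 = e1)
    (hal : a el = (3 : ℤ) • el - (e1 + e2 + e3 + (2 : ℤ) • e7 + e8))
    (ha1 : a e1 = el - e1 - e7) (ha2 : a e2 = el - e2 - e7) (ha3 : a e3 = el - e3 - e7)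
    (ha4 : a e4 = e4) (ha5 : a e5 = e5) (ha6 : a e6 = e6)
    (ha7 : a e7 = (2 : ℤ) • el - (e1 + e2 + e3 + e7 + e8))
    (ha8 : a e8 = el - e7 - e8) (ha9 : a e9 = e9)
    :
    ∀ x : Fin 10 → ℤ, ∃ m n : ℤ, Omega tau x - a x = m • o1 + n • o2 := by
  intro x
  refine ⟨2*x 0 + x 1 + x 2 + x 3 + x 4 + x 5 + x 6,
         3*x 0 + x 1 + x 2 + x 3 + x 4 + x 5 + x 6 + x 7 + 2*x 8, ?_⟩
  have hx : x = x 0 • el + x 1 • e1 + x 2 • e2 + x 3 • e3 + x 4 • e4 + x 5 • e5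
      + x 6 • e6 + x 7 • e7 + x 8 • e8 + x 9 • e9 := by
    funext i
    fin_cases i <;>
      simp [el, e1, e2, e3, e4, e5, e6, e7, e8, e9, Pi.single_apply]
  have h1 : form x (e9 - e1) = x 1 - x 9 := by
    simp only [form, sum_ten, Pi.sub_apply, e9, e1, Pi.single_apply, Fin.reduceEq, reduceIte]
    ring
  have h2 : form x ff = 3 * x 0 + x 1 + x 2 + x 3 + x 4 + x 5 + x 6 + x 7 + x 8 + x 9 := by
    simp only [form, sum_ten, ff, el, e1, e2, e3, e4, e5, e6, e7, e8, e9,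
      Pi.sub_apply, Pi.add_apply, Pi.smul_apply, smul_eq_mul, Pi.single_apply,
      Fin.reduceEq, reduceIte]
    ring
  have htx : tau x = x 0 • tau el + x 1 • tau e1 + x 2 • tau e2 + x 3 • tau e3
      + x 4 • tau e4 + x 5 • tau e5 + x 6 • tau e6 + x 7 • tau e7 + x 8 • tau e8
      + x 9 • tau e9 := by
    conv_lhs => rw [hx]
    simp only [map_add, map_smul]
  have hax : a x = x 0 • a el + x 1 • a e1 + x 2 • a e2 + x 3 • a e3
      + x 4 • a e4 + x 5 • a e5 + x 6 • a e6 + x 7 • a e7 + x 8 • a e8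
      + x 9 • a e9 := by
    conv_lhs => rw [hx]
    simp only [map_add, map_smul]
  rw [Omega, h1, h2, htx, hax, htl, ht1, ht2, ht3, ht4, ht5, ht6, ht7, ht8, ht9,
    hal, ha1, ha2, ha3, ha4, ha5, ha6, ha7, ha8, ha9]
  funext i
  fin_cases i <;>
    · simp only [o1, o2, ff, el, e1, e2, e3, e4, e5, e6, e7, e8, e9,
        Pi.add_apply, Pi.sub_apply, Pi.smul_apply, smul_eq_mul, Pi.single_apply,
        Fin.reduceEq, reduceIte]
      ring
end
end

section
/- Let F ∈ ℂ[x,y,z] be a homogeneous cubic of the form F = F₁(x,y)z² + F₂(x,y)z + F₃(x,y), where F_d is homogeneous of degree d in x, y (equivalently, F is a homogeneous cubic vanishing at b = (0:0:1)), and write G = ∂F/∂z. Define α̃ : ℂ³ → ℂ³ by α̃(v) = (v₁·G(v), v₂·G(v), v₃·G(v) − 2F(v)). Then for every v ∈ ℂ³ \ {0} with G(v) ≠ 0 and G(α̃(v)) ≠ 0, the vector α̃(α̃(v)) is a nonzero scalar multiple of v; that is, α̃ induces a birational involution of the projective plane ℙ²(ℂ): the points [α̃(α̃(v))] and [v] coincide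 in ℙ²(ℂ). (Existence part of Lemma 4.3: the unique birational involution of ℙ² preserving the general line through b and fixing the general point of the cubic Γ = {F = 0} is given by (x:y:z) ↦ (x : y : z − 2F/F_z).) -/
/-! On the line `t ↦ v + t • e₂` through `v` and `b = (0:0:1)`, `F` restricts to a quadratic
`Φ t = f + g t + c t²` with `f = F v`, `g = G v` (its `t³`-coefficient is `F b = 0`), and
`G = ∂F/∂z` restricts to `Φ'`.
Projectively, `α̃` moves the point with parameter `t` to the one with parameter
`t - 2 Φ t / Φ' t`. Starting from `t = 0` it lands at `s = -2f/g`, where one computes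
`Φ s / Φ' s = -f/g`; hence the second application moves back by `2f/g` to `t = 0`.
Homogeneity of `F` and `G` supplies the scalar `g · G(α̃ v)`. -/

noncomputable section

open MvPolynomial

/-- The rational map `(x:y:z) ↦ (x : y : z - 2F/F_z)`, written on homogeneous coordinates. -/
def alphaTilde (F : MvPolynomial (Fin 3) ℂ) (v : Fin 3 → ℂ) : Fin 3 → ℂ :=
  ![v 0 * eval v (pderiv 2 F), v 1 * eval v (pderiv 2 F),
    v 2 * eval v (pderiv 2 F) - 2 * eval v F]

namespace Polynomial

variable {R : Type*} [CommSemiring R] {q : Polynomial R}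

theorem eval_eq_of_natDegree_le_two (hq : q.natDegree ≤ 2) (t : R) :
    q.eval t = q.eval 0 + q.derivative.eval 0 * t + q.coeff 2 * t ^ 2 := by
  rw [eval_eq_sum_range' (n := 3) (by omega)]
  simp [Finset.sum_range_succ, coeff_derivative, ← coeff_zero_eq_eval_zero]

theorem eval_derivative_eq_of_natDegree_le_two (hq : q.natDegree ≤ 2) (t : R) :
    q.derivative.eval t = q.derivative.eval 0 + 2 * q.coeff 2 * t := by
  have hq' : q.derivative.natDegree < 2 := (natDegree_derivative_le q).trans_lt (by omega)
  rw [eval_eq_sum_range' hq']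
  simp [Finset.sum_range_succ, coeff_derivative, ← coeff_zero_eq_eval_zero, mul_comm,
    one_add_one_eq_two]

end Polynomial

namespace MvPolynomial

variable {σ R : Type*} [CommSemiring R] {p : MvPolynomial σ R}

theorem IsHomogeneous.eval_smul {n : ℕ} (hp : p.IsHomogeneous n) (c : R) (v : σ → R) :
    eval (c • v) p = c ^ n * eval v p := by
  simp only [eval_eq, Finset.mul_sum]
  refine Finset.sum_congr rfl fun d hd => ?_
  simp only [Pi.smul_apply, smul_eq_mul, mul_pow, Finset.prod_mul_distrib,
    Finset.prod_pow_eq_pow_sum, ← hp.degree_eq_sum_deg_support hd]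
  ring

variable [DecidableEq σ]

theorem IsHomogeneous.eval_single_one {n : ℕ} (hp : p.IsHomogeneous n) (i : σ) :
    eval (Pi.single i 1) p = coeff (Finsupp.single i n) p := by
  rw [eval_eq, Finset.sum_eq_single (Finsupp.single i n)]
  · rw [Finset.prod_eq_one, mul_one]
    intro j hj
    rw [Finset.mem_singleton.mp (Finsupp.support_single_subset hj)]
    simp
  · intro d hd hne
    obtain ⟨j, hj, hji⟩ : ∃ j ∈ d.support, j ≠ i := by
      by_contra! h
      have hsupp : d.support ⊆ {i} := fun j hj => Finset.mem_singleton.mpr (h j hj)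
      have hdi : n = d i := by
        rw [hp.degree_eq_sum_deg_support hd, Finset.sum_subset hsupp (by simp_all),
          Finset.sum_singleton]
      refine hne (Finsupp.ext fun j => ?_)
      by_cases hji : j = i
      · simp [hji, hdi]
      · have : j ∉ d.support := fun hj => hji (h j hj)
        simp_all
    rw [Finset.prod_eq_zero hj (by simp [hji, Finsupp.mem_support_iff.mp hj]), mul_zero]
  · intro h
    rw [notMem_support_iff.mp h, zero_mul]

theorem IsHomogeneous.degreeOf_le_of_eval_single_one_eq_zero {n : ℕ}
    (hp : p.IsHomogeneous (n + 1)) {i : σ} (hi : eval (Pi.single i 1) p = 0) :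
    p.degreeOf i ≤ n := by
  refine degreeOf_le_iff.mpr fun d hd => not_lt.mp fun hlt => ?_
  have hdeg : d.degree = n + 1 := by
    rw [Finsupp.degree_apply, ← hp.degree_eq_sum_deg_support hd]
  have hsplit : (Finsupp.single i (d i) + d.erase i).degree = n + 1 := by
    rw [Finsupp.single_add_erase, hdeg]
  rw [map_add, Finsupp.degree_single] at hsplit
  have hdi : d i = n + 1 := by omega
  have herase : d.erase i = 0 := (Finsupp.degree_eq_zero_iff _).mp (by omega)
  have : d = Finsupp.single i (n + 1) := by
    rw [← Finsupp.single_add_erase i d, herase, add_zero, hdi]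
  rw [this, mem_support_iff, ← hp.eval_single_one] at hd
  exact hd hi

def restrictToLine (v : σ → R) (i : σ) : MvPolynomial σ R →ₐ[R] Polynomial R :=
  aeval fun j => Polynomial.C (v j) + (Pi.single i Polynomial.X : σ → Polynomial R) j

theorem eval_restrictToLine (v : σ → R) (i : σ) (p : MvPolynomial σ R) (t : R) :
    (restrictToLine v i p).eval t = eval (v + Pi.single i t) p := by
  rw [restrictToLine, ← Polynomial.coe_aeval_eq_eval, ← AlgHom.comp_apply, comp_aeval,
    aeval_eq_eval]
  congr 2
  funext j
  by_cases hj : j = i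
  · subst hj; simp
  · simp [hj]

theorem derivative_restrictToLine (v : σ → R) (i : σ) (p : MvPolynomial σ R) :
    Polynomial.derivative (restrictToLine v i p) = restrictToLine v i (pderiv i p) := by
  induction p using MvPolynomial.induction_on with
  | C a => simp [restrictToLine]
  | add p q hp hq => simp [hp, hq]
  | mul_X p j hp =>
    have hX : restrictToLine v i (X j) =
        Polynomial.C (v j) + (Pi.single i Polynomial.X : σ → Polynomial R) j := aeval_X _ _
    by_cases hj : j = i
    · subst hj; simp [hp, hX, pderiv_X, add_comm, mul_comm]
    · simp [hp, hX, pderiv_X, hj, mul_comm]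

theorem natDegree_restrictToLine_le (v : σ → R) (i : σ) (p : MvPolynomial σ R) :
    (restrictToLine v i p).natDegree ≤ p.degreeOf i := by
  conv_lhs => rw [p.as_sum, map_sum]
  refine Polynomial.natDegree_sum_le_of_forall_le _ _ fun d hd => ?_
  rw [restrictToLine, aeval_monomial, Finsupp.prod, Polynomial.algebraMap_eq]
  refine (Polynomial.natDegree_C_mul_le _ _).trans <| (Polynomial.natDegree_prod_le _ _).trans ?_
  calc ∑ j ∈ d.support,
        ((Polynomial.C (v j) + (Pi.single i Polynomial.X : σ → Polynomial R) j) ^ d j).natDegree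
      ≤ ∑ j ∈ d.support, if j = i then d j else 0 := by
        refine Finset.sum_le_sum fun j _ => Polynomial.natDegree_pow_le.trans ?_
        by_cases hj : j = i
        · subst hj; simpa using Nat.mul_le_mul_left (d j) Polynomial.natDegree_X_le
        · simp [hj]
    _ ≤ d i := by rw [Finset.sum_ite_eq']; split_ifs <;> simp
    _ ≤ p.degreeOf i := monomial_le_degreeOf i hd

theorem exists_eval_add_single_of_degreeOf_le_two {i : σ}
    (hp : p.degreeOf i ≤ 2) (v : σ → R) :
    ∃ c : R, ∀ t : R,
      eval (v + Pi.single i t) p = eval v p + eval v (pderiv i p) * t + c * t ^ 2 ∧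
      eval (v + Pi.single i t) (pderiv i p) = eval v (pderiv i p) + 2 * c * t := by
  have hq := (natDegree_restrictToLine_le v i p).trans hp
  refine ⟨(restrictToLine v i p).coeff 2, fun t => ?_⟩
  have h0 (q : MvPolynomial σ R) : eval v q = (restrictToLine v i q).eval 0 := by
    rw [eval_restrictToLine, Pi.single_zero, add_zero]
  rw [h0 p, h0 (pderiv i p), ← eval_restrictToLine, ← eval_restrictToLine,
    ← derivative_restrictToLine]
  exact ⟨Polynomial.eval_eq_of_natDegree_le_two hq t,
    Polynomial.eval_derivative_eq_of_natDegree_le_two hq t⟩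

end MvPolynomial

theorem alphaTilde_eq (F : MvPolynomial (Fin 3) ℂ) (v : Fin 3 → ℂ) :
    alphaTilde F v = eval v (pderiv 2 F) • v - (2 * eval v F) • Pi.single 2 1 := by
  ext j
  fin_cases j <;> simp [alphaTilde, mul_comm]

theorem alphaTilde_eq_smul_add_single (F : MvPolynomial (Fin 3) ℂ) {v : Fin 3 → ℂ}
    (hg : eval v (pderiv 2 F) ≠ 0) :
    alphaTilde F v = eval v (pderiv 2 F) •
      (v + Pi.single 2 (-2 * eval v F / eval v (pderiv 2 F))) := by
  rw [alphaTilde_eq]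
  ext j
  simp only [Pi.sub_apply, Pi.add_apply, Pi.smul_apply, smul_eq_mul, Pi.single_apply]
  split_ifs
  · field_simp
    ring
  · ring

theorem alphaTilde_alphaTilde (F : MvPolynomial (Fin 3) ℂ) (v : Fin 3 → ℂ) :
    alphaTilde F (alphaTilde F v) =
      (eval v (pderiv 2 F) * eval (alphaTilde F v) (pderiv 2 F)) • v -
        (2 * (eval v F * eval (alphaTilde F v) (pderiv 2 F) + eval (alphaTilde F v) F)) •
          Pi.single 2 1 := by
  ext j
  have hvj := congrFun (alphaTilde_eq F v) j
  rw [alphaTilde_eq F (alphaTilde F v)]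
  simp only [Pi.sub_apply, Pi.smul_apply, smul_eq_mul] at hvj ⊢
  rw [hvj]
  ring

theorem stmt14 (F : MvPolynomial (Fin 3) ℂ) (hF : F.IsHomogeneous 3)
    (hFb : eval (fun i : Fin 3 => if i = 2 then (1 : ℂ) else 0) F = 0) :
    ∀ v : Fin 3 → ℂ, v ≠ 0 → eval v (pderiv 2 F) ≠ 0 →
      eval (alphaTilde F v) (pderiv 2 F) ≠ 0 →
      ∃ c : ℂ, c ≠ 0 ∧ alphaTilde F (alphaTilde F v) = c • v := by
  intro v _ hg hgw
  have hFe : eval (Pi.single 2 1) F = 0 := by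
    convert hFb
    exact Pi.single_apply _ _ _
  obtain ⟨c, hline⟩ := exists_eval_add_single_of_degreeOf_le_two
    (hF.degreeOf_le_of_eval_single_one_eq_zero hFe) v
  have hw := alphaTilde_eq_smul_add_single F hg
  set g := eval v (pderiv 2 F)
  set f := eval v F
  have key : f * eval (alphaTilde F v) (pderiv 2 F) + eval (alphaTilde F v) F = 0 := by
    rw [hw, hF.eval_smul, (hF.pderiv (i := 2)).eval_smul, (hline _).1, (hline _).2]
    field_simp
    ring
  refine ⟨g * eval (alphaTilde F v) (pderiv 2 F), mul_ne_zero hg hgw, ?_⟩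
  rw [alphaTilde_alphaTilde, key, mul_zero, zero_smul, sub_zero]
end
end
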